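/- For a vector r of positive integers r_1, …, r_n with even sum, suppose r_i = Σ_{j≠i} r_j for some index i. Then there is exactly one function N from unordered pairs of indices to nonnegative integers such that for every index m, Σ_{j≠m} N({m,j}) = r_m; namely N({i,j}) = r_j for j ≠ i and N({k,j}) = 0 for k,j ≠ i. -/

import Mathlib

/-- A multigraph on `{1,…,n}` with degree sequence `r`: a symmetric, loopless
nonnegative-integer weighting of pairs of distinct vertices whose degree at
each vertex `m` is `r m`. -/
def IsMultigraph {n : ℕ} (r : Fin n → ℕ) (N : Fin n → Fin n → ℕ) : Prop :=
  (∀ i j, N i j = N j i) ∧ (∀ i, N i i = 0) ∧ (∀ m, ∑ j, N m j = r m)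

/-!
Every other vertex `j` has at most `r j` edges to the hub `i`, while the hub has degree
`r i = Σ_{j ≠ i} r j`. Hence each `j ≠ i` sends all of its `r j` edges to the hub, which
leaves no edge between two vertices different from `i`.
-/

open Finset

variable {n : ℕ} {r : Fin n → ℕ} {N : Fin n → Fin n → ℕ} {i j k : Fin n}

def starMultigraph (r : Fin n → ℕ) (i : Fin n) : Fin n → Fin n → ℕ := fun k j =>
  if k = j then 0 else if k = i then r j else if j = i then r k else 0

theorem isMultigraph_starMultigraph (hi : r i = ∑ j ∈ univ.erase i, r j) :
    IsMultigraph r (starMultigraph r i) := by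
  refine ⟨fun a b => ?_, fun a => by simp [starMultigraph], fun m => ?_⟩
  · unfold starMultigraph
    by_cases hab : a = b
    · simp [hab]
    · by_cases ha : a = i <;> by_cases hb : b = i <;> simp_all [eq_comm]
  · by_cases hm : m = i
    · subst hm
      rw [hi, ← sum_erase _ (by simp [starMultigraph] : starMultigraph r m m m = 0)]
      exact sum_congr rfl fun j hj => by simp [starMultigraph, Ne.symm (ne_of_mem_erase hj)]
    · rw [sum_eq_single i (fun j _ hj => by simp [starMultigraph, hj, hm]) (by simp)]
      simp [starMultigraph, hm]

namespace IsMultigraph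

theorem le_degree (hN : IsMultigraph r N) (k j : Fin n) : N k j ≤ r k :=
  hN.2.2 k ▸ single_le_sum (fun _ _ => Nat.zero_le _) (mem_univ j)

theorem apply_eq_zero_of_apply_eq_degree (hN : IsMultigraph r N) (hki : N k i = r k)
    (hji : j ≠ i) : N k j = 0 := by
  have : N k i + N k j ≤ r k := by
    rw [← hN.2.2 k, ← sum_pair (Ne.symm hji)]
    exact sum_le_sum_of_subset (subset_univ _)
  omega

theorem apply_hub (hN : IsMultigraph r N) (hi : r i = ∑ j ∈ univ.erase i, r j) (hj : j ≠ i) :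
    N j i = r j := by
  have hsum : ∑ l ∈ univ.erase i, N l i = ∑ l ∈ univ.erase i, r l := by
    rw [← hi, ← hN.2.2 i, ← sum_erase _ (hN.2.1 i)]
    exact sum_congr rfl fun l _ => hN.1 l i
  exact (sum_eq_sum_iff_of_le fun l _ => hN.le_degree l i).mp hsum j
    (mem_erase.mpr ⟨hj, mem_univ j⟩)

theorem eq_starMultigraph (hN : IsMultigraph r N) (hi : r i = ∑ j ∈ univ.erase i, r j) :
    N = starMultigraph r i := by
  funext k j
  unfold starMultigraph
  by_cases hkj : k = j
  · simp [hkj, hN.2.1]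
  by_cases hk : k = i
  · subst hk
    simp [hkj, hN.1 k j, hN.apply_hub hi (Ne.symm hkj)]
  by_cases hj : j = i
  · subst hj
    simp [hk, hN.apply_hub hi hk]
  · simp [hkj, hk, hj, hN.apply_eq_zero_of_apply_eq_degree (hN.apply_hub hi hk) hj]

end IsMultigraph

theorem stmt_5_general (n : ℕ) (r : Fin n → ℕ) (i : Fin n)
    (hi : r i = ∑ j ∈ Finset.univ.erase i, r j) :
    IsMultigraph r (fun k j =>
      if k = j then 0 else if k = i then r j else if j = i then r k else 0) ∧
    ∀ N : Fin n → Fin n → ℕ, IsMultigraph r N →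
      N = fun k j =>
        if k = j then 0 else if k = i then r j else if j = i then r k else 0 :=
  ⟨isMultigraph_starMultigraph hi, fun _ hN => hN.eq_starMultigraph hi⟩

/-- if `r i = Σ_{j≠i} r j`, the unique multigraph with degree
sequence `r` is the star at `i`: `N({i,j}) = r j` for `j ≠ i`, all other
multiplicities zero. -/
theorem stmt_5 (n : ℕ) (r : Fin n → ℕ) (hpos : ∀ m, 0 < r m)
    (heven : Even (∑ m, r m)) (i : Fin n)
    (hi : r i = ∑ j ∈ Finset.univ.erase i, r j) :
    IsMultigraph r (fun k j =>
      if k = j then 0 else if k = i then r j else if j = i then r k else 0) ∧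
    ∀ N : Fin n → Fin n → ℕ, IsMultigraph r N →
      N = fun k j =>
        if k = j then 0 else if k = i then r j else if j = i then r k else 0 :=
  stmt_5_general n r i hi
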